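/- For a finite irreducible reversible lazy Markov chain and any a ∈ (0,1), the mixing and separation times satisfy t_mix(a) ≤ t_sep(a) ≤ 2·t_mix(a/4), where t_mix(a) := inf{t : d(t) ≤ a} and t_sep(a) := inf{t : d_sep(t) ≤ a}. -/

import Mathlib

/-!
Every row of `P ^ t` dominates `(1 - d_sep(t)) • π`, and a probability vector dominating `c • π`
is within total variation `1 - c` of `π`; this gives `d(t) ≤ d_sep(t)`. Conversely,
reversibility turns `P^{2t}(x, y) / π y` into `∑ z, P^t(x, z) P^t(y, z) / π z`, which by
Cauchy–Schwarz is at least the square of the overlap `∑ z, min (P^t(x, z)) (P^t(y, z))`, and the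
overlap is at least `1 - 2 d(t)`; hence `d_sep(2t) ≤ 4 d(t)`. Finally, the sets whose infima are
taken must be nonempty (in `ℕ`, `sInf ∅ = 0`): `d_sep` is submultiplicative and `d_sep(N) < 1`
once `P ^ N` is entrywise positive, which laziness and irreducibility provide.
-/

open Finset Matrix

section

variable {ι Ω : Type*}

section Vectors

variable [Fintype ι] {μ ν : ι → ℝ}

lemma le_one_of_forall_mul_le (hμ : ∑ u, μ u = 1) (hν : ∑ u, ν u = 1) {c : ℝ}
    (h : ∀ u, c * ν u ≤ μ u) : c ≤ 1 :=
  calc c = ∑ u, c * ν u := by rw [← mul_sum, hν, mul_one]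
    _ ≤ 1 := hμ ▸ sum_le_sum fun u _ => h u

lemma half_sum_abs_sub_le_one_sub (hμ : ∑ u, μ u = 1) (hν : ∑ u, ν u = 1)
    (hν0 : ∀ u, 0 ≤ ν u) {c : ℝ} (h : ∀ u, c * ν u ≤ μ u) :
    (1 / 2) * ∑ u, |μ u - ν u| ≤ 1 - c := by
  have hc := le_one_of_forall_mul_le hμ hν h
  have hpt : ∀ u, |μ u - ν u| ≤ (μ u - ν u) + 2 * ((1 - c) * ν u) := fun u => by
    have := mul_nonneg (sub_nonneg.2 hc) (hν0 u)
    rw [abs_le]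
    constructor <;> linarith [h u]
  have := sum_le_sum fun u (_ : u ∈ univ) => hpt u
  rw [sum_add_distrib, sum_sub_distrib, ← mul_sum, ← mul_sum, hμ, hν] at this
  linarith

lemma one_sub_half_sum_abs_sub_le_sum_min (hμ : ∑ u, μ u = 1) (hν : ∑ u, ν u = 1) :
    1 - (1 / 2) * ∑ u, |μ u - ν u| ≤ ∑ u, min (μ u) (ν u) := by
  have hpt : ∀ u, min (μ u) (ν u) = (μ u + ν u - |μ u - ν u|) / 2 := fun u => by
    linarith [min_add_max (μ u) (ν u), max_sub_min_eq_abs' (μ u) (ν u)]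
  simp only [hpt, ← sum_div, sum_sub_distrib, sum_add_distrib, hμ, hν]
  linarith

lemma sq_sum_min_le_sum_mul_div {π : ι → ℝ} (hπ0 : ∀ u, 0 < π u) (hπ1 : ∑ u, π u = 1)
    (hμ0 : ∀ u, 0 ≤ μ u) (hν0 : ∀ u, 0 ≤ ν u) :
    (∑ u, min (μ u) (ν u)) ^ 2 ≤ ∑ u, μ u * ν u / π u := by
  have := sq_sum_div_le_sum_sq_div univ (fun u => min (μ u) (ν u)) fun u _ => hπ0 u
  rw [hπ1, div_one] at this
  refine this.trans (sum_le_sum fun u _ => div_le_div_of_nonneg_right ?_ (hπ0 u).le)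
  rw [sq]
  exact mul_le_mul (min_le_left _ _) (min_le_right _ _) (le_min (hμ0 u) (hν0 u)) (hμ0 u)

end Vectors

/-- For `Q = P ^ t`, `tvDist Q π` and `sepDist Q π` are the paper's `d(t)` and `d_sep(t)`. -/
noncomputable def tvDist [Fintype Ω] (Q : Matrix Ω Ω ℝ) (π : Ω → ℝ) : ℝ :=
  ⨆ x, (1 / 2) * ∑ u, |Q x u - π u|

noncomputable def sepDist (Q : Matrix Ω Ω ℝ) (π : Ω → ℝ) : ℝ :=
  1 - ⨅ x, ⨅ y, Q x y / π y

lemma sepDist_le_of_forall [Nonempty Ω] {Q : Matrix Ω Ω ℝ} {π : Ω → ℝ} (hπ0 : ∀ x, 0 < π x)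
    {δ : ℝ} (h : ∀ x y, (1 - δ) * π y ≤ Q x y) : sepDist Q π ≤ δ := by
  suffices 1 - δ ≤ ⨅ x, ⨅ y, Q x y / π y by rw [sepDist]; linarith
  exact le_ciInf fun x => le_ciInf fun y => (le_div_iff₀ (hπ0 y)).2 (h x y)

variable [Fintype Ω] {P Q R : Matrix Ω Ω ℝ} {π : Ω → ℝ}

lemma half_sum_abs_sub_le_tvDist (x : Ω) : (1 / 2) * ∑ u, |Q x u - π u| ≤ tvDist Q π :=
  le_ciSup (f := fun x => (1 / 2) * ∑ u, |Q x u - π u|) (Finite.bddAbove_range _) x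

lemma one_sub_sepDist_mul_le (hπ0 : ∀ x, 0 < π x) (x y : Ω) :
    (1 - sepDist Q π) * π y ≤ Q x y := by
  rw [sepDist, sub_sub_cancel, ← le_div_iff₀ (hπ0 y)]
  exact (ciInf_le (Finite.bddBelow_range _) x).trans (ciInf_le (Finite.bddBelow_range _) y)

/-- Split `Q x ·` into `(1 - α) • π`, which `R` fixes, and a nonnegative remainder. -/
lemma minorization_mul (hQ1 : ∀ x, ∑ z, Q x z = 1) (hπ1 : ∑ x, π x = 1)
    (hR : ∀ y, ∑ z, π z * R z y = π y) {α β : ℝ} (hQα : ∀ x z, (1 - α) * π z ≤ Q x z)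
    (hRβ : ∀ z y, (1 - β) * π y ≤ R z y) (x y : Ω) :
    (1 - α * β) * π y ≤ (Q * R) x y :=
  calc (1 - α * β) * π y
      = (1 - α) * ∑ z, π z * R z y + (∑ z, (Q x z - (1 - α) * π z)) * ((1 - β) * π y) := by
        rw [hR, sum_sub_distrib, hQ1, ← mul_sum, hπ1]; ring
    _ = (1 - α) * ∑ z, π z * R z y + ∑ z, (Q x z - (1 - α) * π z) * ((1 - β) * π y) := by
        rw [sum_mul]
    _ ≤ (1 - α) * ∑ z, π z * R z y + ∑ z, (Q x z - (1 - α) * π z) * R z y := by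
        gcongr with z
        · exact sub_nonneg.2 (hQα x z)
        · exact hRβ z y
    _ = (Q * R) x y := by
        rw [mul_apply, mul_sum, ← sum_add_distrib]
        exact sum_congr rfl fun z _ => by ring

lemma sepDist_mul_le [Nonempty Ω] (hQ1 : ∀ x, ∑ z, Q x z = 1) (hπ0 : ∀ x, 0 < π x)
    (hπ1 : ∑ x, π x = 1) (hR : ∀ y, ∑ z, π z * R z y = π y) :
    sepDist (Q * R) π ≤ sepDist Q π * sepDist R π :=
  sepDist_le_of_forall hπ0 <| minorization_mul hQ1 hπ1 hR (one_sub_sepDist_mul_le hπ0)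
    (one_sub_sepDist_mul_le hπ0)

lemma le_mul_apply_of_nonneg {A B : Matrix Ω Ω ℝ} (hA : ∀ i j, 0 ≤ A i j)
    (hB : ∀ i j, 0 ≤ B i j) (x z y : Ω) : A x z * B z y ≤ (A * B) x y :=
  single_le_sum (f := fun w => A x w * B w y) (fun w _ => mul_nonneg (hA x w) (hB w y))
    (mem_univ z)

variable [DecidableEq Ω]

lemma sepDist_le_one [Nonempty Ω] (hQ : Q ∈ rowStochastic ℝ Ω) (hπ0 : ∀ x, 0 < π x) :
    sepDist Q π ≤ 1 :=
  sepDist_le_of_forall hπ0 fun _ _ => by simpa using nonneg_of_mem_rowStochastic hQ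

lemma sepDist_nonneg [Nonempty Ω] (hQ : Q ∈ rowStochastic ℝ Ω) (hπ0 : ∀ x, 0 < π x)
    (hπ1 : ∑ x, π x = 1) : 0 ≤ sepDist Q π := by
  obtain ⟨x⟩ := ‹Nonempty Ω›
  have := le_one_of_forall_mul_le (sum_row_of_mem_rowStochastic hQ x) hπ1
    (one_sub_sepDist_mul_le hπ0 x)
  linarith

lemma tvDist_le_sepDist [Nonempty Ω] (hQ : Q ∈ rowStochastic ℝ Ω) (hπ0 : ∀ x, 0 < π x)
    (hπ1 : ∑ x, π x = 1) : tvDist Q π ≤ sepDist Q π :=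
  ciSup_le fun x => by
    simpa using half_sum_abs_sub_le_one_sub (sum_row_of_mem_rowStochastic hQ x) hπ1
      (fun u => (hπ0 u).le) (c := 1 - sepDist Q π) (one_sub_sepDist_mul_le hπ0 x)

lemma detailed_balance_pow (hrev : ∀ x y, π x * Q x y = π y * Q y x) (t : ℕ) (x y : Ω) :
    π x * (Q ^ t) x y = π y * (Q ^ t) y x := by
  have h : SemiconjBy (diagonal π) Q Qᵀ := by
    refine Matrix.ext fun x y => ?_
    rw [diagonal_mul, mul_diagonal, transpose_apply, hrev, mul_comm]
  simpa [diagonal_mul, mul_diagonal, ← transpose_pow, mul_comm] using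
    congr_fun₂ (h.pow_right t) x y

lemma stationary_of_detailed_balance (hQ : Q ∈ rowStochastic ℝ Ω)
    (hrev : ∀ x y, π x * Q x y = π y * Q y x) (y : Ω) : ∑ x, π x * Q x y = π y := by
  simp_rw [hrev _ y, ← mul_sum, sum_row_of_mem_rowStochastic hQ, mul_one]

lemma sepDist_mul_self_le [Nonempty Ω] (hQ : Q ∈ rowStochastic ℝ Ω) (hπ0 : ∀ x, 0 < π x)
    (hπ1 : ∑ x, π x = 1) (hrev : ∀ x y, π x * Q x y = π y * Q y x) :
    sepDist (Q * Q) π ≤ 4 * tvDist Q π := by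
  refine sepDist_le_of_forall hπ0 fun x y => ?_
  set d := tvDist Q π
  have hreturn : (Q * Q) x y / π y = ∑ z, Q x z * Q y z / π z := by
    rw [mul_apply, sum_div]
    refine sum_congr rfl fun z _ => ?_
    rw [div_eq_div_iff (hπ0 y).ne' (hπ0 z).ne']
    linear_combination Q x z * hrev z y
  have hoverlap : 1 - 2 * d ≤ ∑ z, min (Q x z) (Q y z) := by
    have htri : ∑ z, |Q x z - Q y z| ≤ ∑ z, |Q x z - π z| + ∑ z, |Q y z - π z| := by
      rw [← sum_add_distrib]
      exact sum_le_sum fun z _ => abs_sub_comm (Q y z) (π z) ▸ abs_sub_le _ _ _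
    linarith [one_sub_half_sum_abs_sub_le_sum_min (sum_row_of_mem_rowStochastic hQ x)
      (sum_row_of_mem_rowStochastic hQ y), half_sum_abs_sub_le_tvDist (Q := Q) (π := π) x,
      half_sum_abs_sub_le_tvDist (Q := Q) (π := π) y]
  have hcs := sq_sum_min_le_sum_mul_div hπ0 hπ1 (fun _ => nonneg_of_mem_rowStochastic hQ)
    (fun _ => nonneg_of_mem_rowStochastic hQ) (μ := Q x) (ν := Q y)
  have hmin0 : 0 ≤ ∑ z, min (Q x z) (Q y z) :=
    sum_nonneg fun _ _ => le_min (nonneg_of_mem_rowStochastic hQ) (nonneg_of_mem_rowStochastic hQ)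
  have hsq : 1 - 4 * d ≤ (∑ z, min (Q x z) (Q y z)) ^ 2 := by
    rcases le_total 0 (1 - 2 * d) with h | h
    · nlinarith [mul_le_mul hoverlap hoverlap h hmin0, sq_nonneg d]
    · nlinarith
  rw [← le_div_iff₀ (hπ0 y), hreturn]
  linarith

lemma sepDist_pow_le [Nonempty Ω] (hQ : Q ∈ rowStochastic ℝ Ω) (hπ0 : ∀ x, 0 < π x)
    (hπ1 : ∑ x, π x = 1) (hrev : ∀ x y, π x * Q x y = π y * Q y x) (k : ℕ) :
    sepDist (Q ^ k) π ≤ sepDist Q π ^ k := by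
  induction k with
  | zero => simpa using sepDist_le_one (one_mem _) hπ0
  | succ k ih =>
    rw [pow_succ', pow_succ']
    calc sepDist (Q * Q ^ k) π ≤ sepDist Q π * sepDist (Q ^ k) π :=
          sepDist_mul_le (sum_row_of_mem_rowStochastic hQ) hπ0 hπ1
            (stationary_of_detailed_balance (pow_mem hQ k) (detailed_balance_pow hrev k))
      _ ≤ sepDist Q π * sepDist Q π ^ k :=
          mul_le_mul_of_nonneg_left ih (sepDist_nonneg hQ hπ0 hπ1)

lemma pow_apply_self_pos (hP : P ∈ rowStochastic ℝ Ω) (hdiag : ∀ x, 0 < P x x) (n : ℕ)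
    (x : Ω) : 0 < (P ^ n) x x := by
  induction n with
  | zero => simp
  | succ n ih =>
    rw [pow_succ]
    exact (mul_pos ih (hdiag x)).trans_le <|
      le_mul_apply_of_nonneg (pow_mem hP n).1 hP.1 x x x

lemma exists_pow_pos (hP : P ∈ rowStochastic ℝ Ω) (hdiag : ∀ x, 0 < P x x)
    (hirr : ∀ x y, ∃ t : ℕ, 0 < (P ^ t) x y) : ∃ N, ∀ x y, 0 < (P ^ N) x y := by
  choose t ht using hirr
  refine ⟨univ.sup fun p : Ω × Ω => t p.1 p.2, fun x y => ?_⟩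
  have hle : t x y ≤ univ.sup fun p : Ω × Ω => t p.1 p.2 :=
    le_sup (f := fun p : Ω × Ω => t p.1 p.2) (mem_univ (x, y))
  rw [← Nat.sub_add_cancel hle, pow_add]
  exact (mul_pos (pow_apply_self_pos hP hdiag _ x) (ht x y)).trans_le <|
    le_mul_apply_of_nonneg (pow_mem hP _).1 (pow_mem hP _).1 x x y

lemma exists_sepDist_pow_le [Nonempty Ω] (hP : P ∈ rowStochastic ℝ Ω) (hπ0 : ∀ x, 0 < π x)
    (hπ1 : ∑ x, π x = 1) (hrev : ∀ x y, π x * P x y = π y * P y x) {N : ℕ}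
    (hN : ∀ x y, 0 < (P ^ N) x y) {b : ℝ} (hb : 0 < b) : ∃ s, sepDist (P ^ s) π ≤ b := by
  obtain ⟨⟨x₀, y₀⟩, hmin⟩ := Finite.exists_min fun p : Ω × Ω => (P ^ N) p.1 p.2 / π p.2
  have hsep : sepDist (P ^ N) π < 1 := by
    refine (sepDist_le_of_forall hπ0 (δ := 1 - (P ^ N) x₀ y₀ / π y₀) fun x y => ?_).trans_lt ?_
    · rw [sub_sub_cancel, ← le_div_iff₀ (hπ0 y)]
      exact hmin (x, y)
    · linarith [div_pos (hN x₀ y₀) (hπ0 y₀)]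
  obtain ⟨k, hk⟩ := exists_pow_lt_of_lt_one hb hsep
  refine ⟨N * k, ?_⟩
  rw [pow_mul]
  exact (sepDist_pow_le (pow_mem hP N) hπ0 hπ1 (detailed_balance_pow hrev N) k).trans hk.le

end

theorem stmt9_general {Ω : Type*} [Fintype Ω] [Nonempty Ω] [DecidableEq Ω]
    (P : Matrix Ω Ω ℝ) (π : Ω → ℝ)
    (hP0 : ∀ x y, 0 ≤ P x y) (hP1 : ∀ x, ∑ y, P x y = 1)
    (hπ0 : ∀ x, 0 < π x) (hπ1 : ∑ x, π x = 1)
    (hrev : ∀ x y, π x * P x y = π y * P y x)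
    (hirr : ∀ x y, ∃ t : ℕ, 0 < (P ^ t) x y)
    (hlazy : ∀ x, (1 : ℝ) / 2 ≤ P x x)
    (a : ℝ) (ha0 : 0 < a) :
    sInf {s : ℕ | (⨆ x, (1 / 2) * ∑ u, |(P ^ s) x u - π u|) ≤ a} ≤
        sInf {s : ℕ | 1 - (⨅ x, ⨅ y, (P ^ s) x y / π y) ≤ a}
      ∧
    sInf {s : ℕ | 1 - (⨅ x, ⨅ y, (P ^ s) x y / π y) ≤ a} ≤
        2 * sInf {s : ℕ | (⨆ x, (1 / 2) * ∑ u, |(P ^ s) x u - π u|) ≤ a / 4} := by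
  show sInf {s | tvDist (P ^ s) π ≤ a} ≤ sInf {s | sepDist (P ^ s) π ≤ a} ∧
    sInf {s | sepDist (P ^ s) π ≤ a} ≤ 2 * sInf {s | tvDist (P ^ s) π ≤ a / 4}
  have hP : P ∈ rowStochastic ℝ Ω := mem_rowStochastic_iff_sum.2 ⟨hP0, hP1⟩
  have htv_le_sep (t : ℕ) : tvDist (P ^ t) π ≤ sepDist (P ^ t) π :=
    tvDist_le_sepDist (pow_mem hP t) hπ0 hπ1
  obtain ⟨N, hN⟩ := exists_pow_pos hP (fun x => by linarith [hlazy x]) hirr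
  obtain ⟨s, hs⟩ := exists_sepDist_pow_le hP hπ0 hπ1 hrev hN (b := a / 4) (by positivity)
  have hsep : {s | sepDist (P ^ s) π ≤ a}.Nonempty := ⟨s, hs.trans (by linarith)⟩
  have htv : {s | tvDist (P ^ s) π ≤ a / 4}.Nonempty := ⟨s, (htv_le_sep s).trans hs⟩
  set m := sInf {s | tvDist (P ^ s) π ≤ a / 4}
  have hm : tvDist (P ^ m) π ≤ a / 4 := Nat.sInf_mem htv
  refine ⟨Nat.sInf_le ((htv_le_sep _).trans (Nat.sInf_mem hsep)), Nat.sInf_le ?_⟩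
  calc sepDist (P ^ (2 * m)) π = sepDist (P ^ m * P ^ m) π := by rw [two_mul, pow_add]
    _ ≤ 4 * tvDist (P ^ m) π :=
        sepDist_mul_self_le (pow_mem hP m) hπ0 hπ1 (detailed_balance_pow hrev m)
    _ ≤ a := by linarith

/-- For a finite irreducible reversible lazy Markov chain and any
`a ∈ (0,1)`: `t_mix(a) ≤ t_sep(a) ≤ 2·t_mix(a/4)`, where
`t_mix(a) = inf{t : d(t) ≤ a}` and `t_sep(a) = inf{t : d_sep(t) ≤ a}`. -/
theorem stmt9 {Ω : Type*} [Fintype Ω] [Nonempty Ω] [DecidableEq Ω]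
    (P : Matrix Ω Ω ℝ) (π : Ω → ℝ)
    (hP0 : ∀ x y, 0 ≤ P x y) (hP1 : ∀ x, ∑ y, P x y = 1)
    (hπ0 : ∀ x, 0 < π x) (hπ1 : ∑ x, π x = 1)
    (hrev : ∀ x y, π x * P x y = π y * P y x)
    (hirr : ∀ x y, ∃ t : ℕ, 0 < (P ^ t) x y)
    (hlazy : ∀ x, (1 : ℝ) / 2 ≤ P x x)
    (a : ℝ) (ha0 : 0 < a) (ha1 : a < 1) :
    sInf {s : ℕ | (⨆ x, (1 / 2) * ∑ u, |(P ^ s) x u - π u|) ≤ a} ≤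
        sInf {s : ℕ | 1 - (⨅ x, ⨅ y, (P ^ s) x y / π y) ≤ a}
      ∧
    sInf {s : ℕ | 1 - (⨅ x, ⨅ y, (P ^ s) x y / π y) ≤ a} ≤
        2 * sInf {s : ℕ | (⨆ x, (1 / 2) * ∑ u, |(P ^ s) x u - π u|) ≤ a / 4} :=
  stmt9_general P π hP0 hP1 hπ0 hπ1 hrev hirr hlazy a ha0
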